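/- arXiv:2303.11246 — 2 statements merged into one kernel-verified Lean document; each statement's English description precedes it below -/
import Mathlib

section
/- Let (X, ≤) be an Esakia space and let R be the collection of its regular clopen upsets. The following are equivalent: (a) every clopen upset of X belongs to the Heyting closure ⟨R⟩; (b) for every Esakia space Y and every surjective p-morphism f : X → Y, if the restriction of f to the maximal elements of X is a homeomorphism onto the set of maximal elements of Y (both with subspace topologies), then f itself is an isomorphism of Esakia spaces, i.e. a homeomorphism and an order-isomorphism. -/
universe u

/-- The downward closure of a set in a preorder. -/
def dwn {X : Type*} [Preorder X] (U : Set X) : Set X := {x | ∃ y ∈ U, x ≤ y}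

/-- `pstar U = (U↓)ᶜ`. -/
def pstar {X : Type*} [Preorder X] (U : Set X) : Set X := (dwn U)ᶜ

/-- Heyting implication of upsets: `U ⇨ V := ((U \ V)↓)ᶜ`. -/
def heyImp {X : Type*} [Preorder X] (U V : Set X) : Set X := (dwn (U \ V))ᶜ

/-- Esakia space: compact, Priestley separation, downsets of clopens are clopen. -/
def IsEsakia (X : Type*) [TopologicalSpace X] [PartialOrder X] : Prop :=
  CompactSpace X ∧
    (∀ x y : X, ¬x ≤ y → ∃ U : Set X, IsClopen U ∧ IsUpperSet U ∧ x ∈ U ∧ y ∉ U) ∧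
    (∀ U : Set X, IsClopen U → IsClopen (dwn U))

/-- Regular clopen upset: clopen, an upset, and `U = U**`. -/
def IsRCU {X : Type*} [TopologicalSpace X] [PartialOrder X] (U : Set X) : Prop :=
  IsClopen U ∧ IsUpperSet U ∧ U = pstar (pstar U)

/-- The set of maximal elements of `X`. -/
def maxSet (X : Type*) [Preorder X] : Set X := {m | ∀ y, m ≤ y → y = m}

/-- The Heyting closure of a collection `R` of sets: the least collection
containing `R`, `∅` and the whole space, closed under `∩`, `∪` and `⇨`. -/
inductive HClos {X : Type*} [Preorder X] (R : Set (Set X)) : Set X → Prop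
  | base : ∀ U ∈ R, HClos R U
  | bot : HClos R ∅
  | top : HClos R Set.univ
  | inter : ∀ {U V}, HClos R U → HClos R V → HClos R (U ∩ V)
  | union : ∀ {U V}, HClos R U → HClos R V → HClos R (U ∪ V)
  | imp : ∀ {U V}, HClos R U → HClos R V → HClos R (heyImp U V)

/-- A p-morphism of Esakia spaces: continuous, monotone, with the back condition. -/
def IsPMorphism {X Y : Type*} [TopologicalSpace X] [Preorder X]
    [TopologicalSpace Y] [Preorder Y] (f : X → Y) : Prop :=
  Continuous f ∧ Monotone f ∧ ∀ (x : X) (y' : Y), f x ≤ y' → ∃ y, x ≤ y ∧ f y = y'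

section aux
variable {X : Type*} [Preorder X]

lemma subset_dwn (U : Set X) : U ⊆ dwn U := fun x hx => ⟨x, hx, le_rfl⟩

lemma dwn_mono {U V : Set X} (h : U ⊆ V) : dwn U ⊆ dwn V :=
  fun x ⟨y, hy, hxy⟩ => ⟨y, h hy, hxy⟩

lemma isLowerSet_dwn (U : Set X) : IsLowerSet (dwn U) :=
  fun _ b hba ⟨y, hy, h⟩ => ⟨y, hy, hba.trans h⟩

lemma isUpperSet_pstar (U : Set X) : IsUpperSet (pstar U) :=
  (isLowerSet_dwn U).compl

lemma isUpperSet_heyImp (U V : Set X) : IsUpperSet (heyImp U V) :=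
  (isLowerSet_dwn (U \ V)).compl

lemma pstar_anti {U V : Set X} (h : U ⊆ V) : pstar V ⊆ pstar U :=
  Set.compl_subset_compl.2 (dwn_mono h)

lemma subset_pstar_pstar {U : Set X} (hU : IsUpperSet U) : U ⊆ pstar (pstar U) := by
  intro x hx hmem
  obtain ⟨z, hz, hxz⟩ := hmem
  exact hz (subset_dwn U (hU hxz hx))

lemma pstar_pstar_pstar {U : Set X} (hU : IsUpperSet U) :
    pstar (pstar (pstar U)) = pstar U :=
  le_antisymm (pstar_anti (subset_pstar_pstar hU))
    (subset_pstar_pstar (isUpperSet_pstar U))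

lemma max_mem_dwn {m : X} (hm : m ∈ maxSet X) {U : Set X} : m ∈ dwn U ↔ m ∈ U := by
  constructor
  · rintro ⟨y, hy, hmy⟩
    rw [← hm y hmy]; exact hy
  · exact fun h => subset_dwn U h

lemma max_mem_pstar_pstar {m : X} (hm : m ∈ maxSet X) {U : Set X} :
    m ∈ pstar (pstar U) ↔ m ∈ dwn U := by
  unfold pstar
  rw [Set.mem_compl_iff, max_mem_dwn hm, Set.mem_compl_iff, not_not]

end aux

section esakia
variable {X : Type*} [TopologicalSpace X] [PartialOrder X] (hX : IsEsakia X)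
include hX

lemma esakia_t2 : T2Space X := by
  constructor
  intro x y hxy
  rcases (em (x ≤ y)) with h | h
  · have h2 : ¬ y ≤ x := fun h' => hxy (le_antisymm h h')
    obtain ⟨U, hUc, _, hyU, hxU⟩ := hX.2.1 y x h2
    exact ⟨Uᶜ, U, hUc.compl.isOpen, hUc.isOpen, hxU, hyU, Set.disjoint_left.2 fun a ha ha' => ha ha'⟩
  · obtain ⟨U, hUc, _, hxU, hyU⟩ := hX.2.1 x y h
    exact ⟨U, Uᶜ, hUc.isOpen, hUc.compl.isOpen, hxU, hyU, disjoint_compl_right⟩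

lemma esakia_isClosed_Ici (x : X) : IsClosed (Set.Ici x) := by
  rw [← isOpen_compl_iff]
  rw [isOpen_iff_forall_mem_open]
  intro z hz
  obtain ⟨U, hUc, hUu, hxU, hzU⟩ := hX.2.1 x z hz
  exact ⟨Uᶜ, fun w hw (hxw : x ≤ w) => hw (hUu hxw hxU), hUc.compl.isOpen, hzU⟩

lemma esakia_exists_max (x : X) : ∃ m ∈ maxSet X, x ≤ m := by
  haveI := hX.1
  have key : ∀ c ⊆ Set.Ici x, IsChain (· ≤ ·) c → ∀ y ∈ c, ∃ ub, ∀ z ∈ c, z ≤ ub := by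
    intro c hc hchain y hy
    haveI : Nonempty c := ⟨⟨y, hy⟩⟩
    obtain ⟨z, hz⟩ := IsCompact.nonempty_iInter_of_directed_nonempty_isCompact_isClosed
      (fun i : c => Set.Ici i.1)
      (fun i j => by
        rcases hchain.total i.2 j.2 with h | h
        · exact ⟨j, Set.Ici_subset_Ici.2 h, le_refl _⟩
        · exact ⟨i, le_refl _, Set.Ici_subset_Ici.2 h⟩)
      (fun i => ⟨i.1, le_rfl⟩)
      (fun i => (esakia_isClosed_Ici hX i.1).isCompact)
      (fun i => esakia_isClosed_Ici hX i.1)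
    exact ⟨z, fun w hw => by simpa using Set.mem_iInter.1 hz ⟨w, hw⟩⟩
  obtain ⟨m, hxm, hm⟩ := zorn_le_nonempty_Ici₀ x key x le_rfl
  exact ⟨m, fun z hz => le_antisymm (hm hz) hz, hxm⟩

lemma esakia_isClosed_maxSet : IsClosed (maxSet X) := by
  rw [← isOpen_compl_iff, isOpen_iff_forall_mem_open]
  intro x hx
  simp only [maxSet, Set.mem_compl_iff, Set.mem_setOf_eq, not_forall] at hx
  obtain ⟨y, hxy, hne⟩ := hx
  have hyx : ¬ y ≤ x := fun h => hne (le_antisymm h hxy)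
  obtain ⟨U, hUc, hUu, hyU, hxU⟩ := hX.2.1 y x hyx
  refine ⟨dwn U \ U, ?_, ((hX.2.2 U hUc).diff hUc).isOpen, ⟨⟨y, hyU, hxy⟩, hxU⟩⟩
  rintro z ⟨⟨w, hw, hzw⟩, hz⟩ hmax
  exact hz ((hmax w hzw) ▸ hw)

lemma esakia_isClopen_pstar {U : Set X} (hU : IsClopen U) : IsClopen (pstar U) :=
  (hX.2.2 U hU).compl

lemma esakia_isRCU_pstar_pstar {U : Set X} (hU : IsClopen U) :
    IsRCU (pstar (pstar U)) :=
  ⟨esakia_isClopen_pstar hX (esakia_isClopen_pstar hX hU), isUpperSet_pstar _,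
    (pstar_pstar_pstar (isUpperSet_pstar U)).symm⟩

lemma esakia_dwn_eq_dwn_max {U : Set X} (hUu : IsUpperSet U) :
    dwn U = dwn (maxSet X ∩ U) := by
  apply le_antisymm
  · rintro x ⟨y, hy, hxy⟩
    obtain ⟨m, hm, hym⟩ := esakia_exists_max hX y
    exact ⟨m, ⟨hm, hUu hym hy⟩, hxy.trans hym⟩
  · exact dwn_mono Set.inter_subset_right

lemma hclos_isClopen_isUpperSet {U : Set X}
    (h : HClos {V : Set X | IsRCU V} U) : IsClopen U ∧ IsUpperSet U := by
  induction h with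
  | base U hU => exact ⟨hU.1, hU.2.1⟩
  | bot => exact ⟨isClopen_empty, fun _ _ _ h => h⟩
  | top => exact ⟨isClopen_univ, fun _ _ _ _ => trivial⟩
  | inter h1 h2 ih1 ih2 => exact ⟨ih1.1.inter ih2.1, ih1.2.inter ih2.2⟩
  | union h1 h2 ih1 ih2 => exact ⟨ih1.1.union ih2.1, ih1.2.union ih2.2⟩
  | imp h1 h2 ih1 ih2 =>
      exact ⟨(hX.2.2 _ (ih1.1.diff ih2.1)).compl, isUpperSet_heyImp _ _⟩

end esakia

section quot
variable (X : Type u) [TopologicalSpace X] [PartialOrder X]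

/-- The equivalence induced by the Heyting closure of regular clopen upsets. -/
def eSetoid : Setoid X :=
  ⟨fun x y => ∀ U : Set X, HClos {V : Set X | IsRCU V} U → (x ∈ U ↔ y ∈ U),
   ⟨fun _ _ _ => Iff.rfl, fun h U hU => (h U hU).symm,
    fun h h' U hU => (h U hU).trans (h' U hU)⟩⟩

abbrev EQuot := Quotient (eSetoid X)

instance : PartialOrder (EQuot X) where
  le q₁ q₂ := ∀ x y : X, Quotient.mk (eSetoid X) x = q₁ → Quotient.mk (eSetoid X) y = q₂ →
    ∀ U : Set X, HClos {V : Set X | IsRCU V} U → x ∈ U → y ∈ U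
  lt q₁ q₂ := (∀ x y : X, Quotient.mk (eSetoid X) x = q₁ → Quotient.mk (eSetoid X) y = q₂ →
    ∀ U : Set X, HClos {V : Set X | IsRCU V} U → x ∈ U → y ∈ U) ∧
    ¬ (∀ x y : X, Quotient.mk (eSetoid X) x = q₂ → Quotient.mk (eSetoid X) y = q₁ →
    ∀ U : Set X, HClos {V : Set X | IsRCU V} U → x ∈ U → y ∈ U)
  lt_iff_le_not_ge _ _ := Iff.rfl
  le_refl q := by
    intro x y hx hy U hU hxU
    have h : (eSetoid X) x y := Quotient.exact (hx.trans hy.symm)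
    exact (h U hU).1 hxU
  le_trans a b c h1 h2 := by
    intro x z hx hz U hU hxU
    obtain ⟨y, hy⟩ := Quotient.exists_rep b
    exact h2 y z hy hz U hU (h1 x y hx hy U hU hxU)
  le_antisymm a b h1 h2 := by
    obtain ⟨x, hx⟩ := Quotient.exists_rep a
    obtain ⟨y, hy⟩ := Quotient.exists_rep b
    rw [← hx, ← hy]
    exact Quotient.sound (fun U hU => ⟨h1 x y hx hy U hU, h2 y x hy hx U hU⟩)

instance : Preorder (EQuot X) := (instPartialOrderEQuot X).toPreorder

instance : LE (EQuot X) := (instPartialOrderEQuot X).toLE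

instance : LT (EQuot X) := (instPartialOrderEQuot X).toLT

variable {X}

lemma equot_le_iff {x y : X} :
    Quotient.mk (eSetoid X) x ≤ Quotient.mk (eSetoid X) y ↔
      ∀ U : Set X, HClos {V : Set X | IsRCU V} U → x ∈ U → y ∈ U := by
  constructor
  · exact fun h => h x y rfl rfl
  · intro h x' y' hx' hy' U hU hx'U
    have hxx : (eSetoid X) x' x := Quotient.exact hx'
    have hyy : (eSetoid X) y' y := Quotient.exact hy'
    exact (hyy U hU).2 (h U hU ((hxx U hU).1 hx'U))

lemma equot_sat {U : Set X} (hU : HClos {V : Set X | IsRCU V} U) :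
    Quotient.mk (eSetoid X) ⁻¹' (Quotient.mk (eSetoid X) '' U) = U := by
  ext x
  constructor
  · rintro ⟨y, hy, hxy⟩
    exact ((Quotient.exact hxy) U hU).1 hy
  · exact fun h => ⟨x, h, rfl⟩

lemma equot_image_isClopen (hX : IsEsakia X) {U : Set X}
    (hU : HClos {V : Set X | IsRCU V} U) :
    IsClopen (Quotient.mk (eSetoid X) '' U) := by
  have hcl := (hclos_isClopen_isUpperSet hX hU).1
  constructor
  · rw [← isOpen_compl_iff, ← isQuotientMap_quotient_mk'.isOpen_preimage]
    show IsOpen (Quotient.mk (eSetoid X) ⁻¹' _)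
    rw [Set.preimage_compl, equot_sat hU]
    exact hcl.1.isOpen_compl
  · rw [← isQuotientMap_quotient_mk'.isOpen_preimage]
    show IsOpen (Quotient.mk (eSetoid X) ⁻¹' _)
    rw [equot_sat hU]
    exact hcl.2

lemma equot_monotone (hX : IsEsakia X) : Monotone (Quotient.mk (eSetoid X)) := by
  intro x y hxy
  rw [equot_le_iff]
  intro U hU hxU
  exact (hclos_isClopen_isUpperSet hX hU).2 hxy hxU

end quot

section quot2
variable {X : Type u} [TopologicalSpace X] [PartialOrder X] (hX : IsEsakia X)
include hX

lemma equot_back {x : X} {q : EQuot X} (h : Quotient.mk (eSetoid X) x ≤ q) :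
    ∃ z, x ≤ z ∧ Quotient.mk (eSetoid X) z = q := by
  classical
  obtain ⟨y, rfl⟩ := Quotient.exists_rep q
  have hxy := equot_le_iff.1 h
  haveI := hX.1
  have key2 : ∀ U W : Set X, HClos {V : Set X | IsRCU V} U →
      HClos {V : Set X | IsRCU V} W → y ∈ U → y ∉ W →
      ∃ z, x ≤ z ∧ z ∈ U ∧ z ∉ W := by
    intro U W hU hW hyU hyW
    by_contra hcon
    push_neg at hcon
    have hx' : x ∈ heyImp U W := by
      intro hmem
      obtain ⟨z, ⟨hzU, hzW⟩, hxz⟩ := hmem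
      exact hzW (hcon z hxz hzU)
    have hy' := hxy _ (HClos.imp hU hW) hx'
    exact hy' (subset_dwn _ ⟨hyU, hyW⟩)
  set t : {U : Set X // HClos {V : Set X | IsRCU V} U} → Set X :=
    fun i => if y ∈ i.1 then i.1 else (i.1)ᶜ with ht
  have haux : ∀ u : Finset {U : Set X // HClos {V : Set X | IsRCU V} U},
      ∃ U W : Set X, HClos {V : Set X | IsRCU V} U ∧ HClos {V : Set X | IsRCU V} W ∧
        y ∈ U ∧ y ∉ W ∧ ∀ z, z ∈ U → z ∉ W → z ∈ ⋂ i ∈ u, t i := by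
    intro u
    induction u using Finset.induction_on with
    | empty => exact ⟨Set.univ, ∅, HClos.top, HClos.bot, trivial, fun h => h,
        fun z _ _ => by simp⟩
    | insert _ _ hnotmem ih =>
        rename_i a u
        obtain ⟨U, W, hU, hW, hyU, hyW, hsub⟩ := ih
        by_cases hy : y ∈ a.1
        · refine ⟨U ∩ a.1, W, HClos.inter hU a.2, hW, ⟨hyU, hy⟩, hyW, fun z hz hzW => ?_⟩
          rw [Finset.set_biInter_insert]
          exact ⟨by simp [ht, if_pos hy, hz.2], hsub z hz.1 hzW⟩
        · refine ⟨U, W ∪ a.1, hU, HClos.union hW a.2, hyU,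
            fun hmem => hmem.elim hyW hy, fun z hz hzW => ?_⟩
          rw [Finset.set_biInter_insert]
          constructor
          · simp only [ht, if_neg hy]
            exact fun hza => hzW (Or.inr hza)
          · exact hsub z hz (fun hzw => hzW (Or.inl hzw))
  have hne := IsCompact.inter_iInter_nonempty (esakia_isClosed_Ici hX x).isCompact t
    (fun i => by
      by_cases hy : y ∈ i.1
      · simp only [ht, if_pos hy]
        exact (hclos_isClopen_isUpperSet hX i.2).1.isClosed
      · simp only [ht, if_neg hy]
        exact (hclos_isClopen_isUpperSet hX i.2).1.compl.isClosed)
    (fun u => by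
      obtain ⟨U, W, hU, hW, hyU, hyW, hsub⟩ := haux u
      obtain ⟨z, hxz, hzU, hzW⟩ := key2 U W hU hW hyU hyW
      exact ⟨z, hxz, hsub z hzU hzW⟩)
  obtain ⟨z, hxz, hz⟩ := hne
  refine ⟨z, hxz, Quotient.sound (fun U hU => ?_)⟩
  have hz' := Set.mem_iInter.1 hz ⟨U, hU⟩
  by_cases hy : y ∈ U
  · simp only [ht, if_pos hy] at hz'
    exact ⟨fun _ => hy, fun _ => hz'⟩
  · simp only [ht, if_neg hy] at hz'
    exact ⟨fun hzz => absurd hzz hz', fun hyy => absurd hyy hy⟩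

end quot2

section quot3
variable {X : Type u} [TopologicalSpace X] [PartialOrder X]

lemma equot_continuous_mk : Continuous (Quotient.mk (eSetoid X)) :=
  continuous_quotient_mk'

lemma equot_image_isClopen' {D : Set X} (hD : IsClopen D)
    (hsat : Quotient.mk (eSetoid X) ⁻¹' (Quotient.mk (eSetoid X) '' D) = D) :
    IsClopen (Quotient.mk (eSetoid X) '' D) := by
  constructor
  · rw [← isOpen_compl_iff, ← isQuotientMap_quotient_mk'.isOpen_preimage]
    show IsOpen (Quotient.mk (eSetoid X) ⁻¹' _)
    rw [Set.preimage_compl, hsat]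
    exact hD.1.isOpen_compl
  · rw [← isQuotientMap_quotient_mk'.isOpen_preimage]
    show IsOpen (Quotient.mk (eSetoid X) ⁻¹' _)
    rw [hsat]
    exact hD.2

variable (hX : IsEsakia X)
include hX

lemma equot_max_mem {m : X} (hm : m ∈ maxSet X) :
    Quotient.mk (eSetoid X) m ∈ maxSet (EQuot X) := by
  intro q hq
  obtain ⟨z, hmz, hz⟩ := equot_back hX hq
  rw [← hz, hm z hmz]

lemma equot_max_surj {q : EQuot X} (hq : q ∈ maxSet (EQuot X)) :
    ∃ m ∈ maxSet X, Quotient.mk (eSetoid X) m = q := by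
  obtain ⟨x, rfl⟩ := Quotient.exists_rep q
  obtain ⟨m, hm, hxm⟩ := esakia_exists_max hX x
  exact ⟨m, hm, hq _ (equot_monotone hX hxm)⟩

lemma equot_max_inj {m m' : X} (hm : m ∈ maxSet X) (hm' : m' ∈ maxSet X)
    (h : Quotient.mk (eSetoid X) m = Quotient.mk (eSetoid X) m') : m = m' := by
  by_contra hne
  have h1 : ¬ m ≤ m' := fun hh => hne (hm m' hh).symm
  obtain ⟨U, hUc, hUu, hmU, hm'U⟩ := hX.2.1 m m' h1
  have hW : HClos {V : Set X | IsRCU V} (pstar (pstar U)) :=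
    HClos.base _ (esakia_isRCU_pstar_pstar hX hUc)
  have hmem : m ∈ pstar (pstar U) :=
    (max_mem_pstar_pstar hm).2 (subset_dwn _ hmU)
  have hmem' : m' ∉ pstar (pstar U) := fun hc =>
    hm'U ((max_mem_dwn hm').1 ((max_mem_pstar_pstar hm').1 hc))
  exact hmem' (((Quotient.exact h) _ hW).1 hmem)

lemma equot_t2 : T2Space (EQuot X) := by
  constructor
  intro q q' hne
  obtain ⟨x, rfl⟩ := Quotient.exists_rep q
  obtain ⟨y, rfl⟩ := Quotient.exists_rep q'
  have hns : ¬ (eSetoid X) x y := fun h => hne (Quotient.sound h)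
  have : ∃ U : Set X, HClos {V : Set X | IsRCU V} U ∧ ¬ (x ∈ U ↔ y ∈ U) := by
    by_contra hc
    push_neg at hc
    exact hns (fun U hU => hc U hU)
  obtain ⟨U, hU, hxy⟩ := this
  rw [not_iff] at hxy
  have hclop := equot_image_isClopen hX hU
  by_cases hy : y ∈ U
  · have hx : x ∉ U := hxy.2 hy
    refine ⟨(Quotient.mk (eSetoid X) '' U)ᶜ, Quotient.mk (eSetoid X) '' U,
      hclop.compl.isOpen, hclop.isOpen, ?_, ⟨y, hy, rfl⟩, disjoint_compl_left⟩
    intro hc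
    exact hx (by rw [← equot_sat hU]; exact hc)
  · have hx : x ∈ U := not_not.1 (fun hxx => hy (hxy.1 hxx))
    refine ⟨Quotient.mk (eSetoid X) '' U, (Quotient.mk (eSetoid X) '' U)ᶜ,
      hclop.isOpen, hclop.compl.isOpen, ⟨x, hx, rfl⟩, ?_, disjoint_compl_right⟩
    intro hc
    exact hy (by rw [← equot_sat hU]; exact hc)

lemma equot_isEsakia : IsEsakia (EQuot X) := by
  haveI := hX.1
  refine ⟨Quotient.compactSpace, ?_, ?_⟩
  · intro q1 q2 hle
    obtain ⟨x, rfl⟩ := Quotient.exists_rep q1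
    obtain ⟨y, rfl⟩ := Quotient.exists_rep q2
    rw [equot_le_iff] at hle
    push_neg at hle
    obtain ⟨U, hU, hxU, hyU⟩ := hle
    refine ⟨Quotient.mk (eSetoid X) '' U, equot_image_isClopen hX hU, ?_, ⟨x, hxU, rfl⟩, ?_⟩
    · rintro q q' hqq' ⟨a, ha, rfl⟩
      obtain ⟨b, rfl⟩ := Quotient.exists_rep q'
      exact ⟨b, equot_le_iff.1 hqq' U hU ha, rfl⟩
    · rintro ⟨b, hb, hby⟩
      exact hyU (((Quotient.exact hby) U hU).1 hb)
  · intro C hC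
    have hB : IsClopen (Quotient.mk (eSetoid X) ⁻¹' C) := hC.preimage equot_continuous_mk
    have hD : IsClopen (dwn (Quotient.mk (eSetoid X) ⁻¹' C)) := hX.2.2 _ hB
    have hDsat : Quotient.mk (eSetoid X) ⁻¹'
        (Quotient.mk (eSetoid X) '' dwn (Quotient.mk (eSetoid X) ⁻¹' C)) =
        dwn (Quotient.mk (eSetoid X) ⁻¹' C) := by
      refine Set.Subset.antisymm ?_ (Set.subset_preimage_image _ _)
      rintro x ⟨x', ⟨z, hz, hx'z⟩, hxx⟩
      have hle : Quotient.mk (eSetoid X) x ≤ Quotient.mk (eSetoid X) z := by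
        rw [← hxx]
        exact equot_monotone hX hx'z
      obtain ⟨w, hxw, hw⟩ := equot_back hX hle
      refine ⟨w, ?_, hxw⟩
      show Quotient.mk (eSetoid X) w ∈ C
      rw [hw]
      exact hz
    have him : dwn C = Quotient.mk (eSetoid X) '' dwn (Quotient.mk (eSetoid X) ⁻¹' C) := by
      ext q
      constructor
      · rintro ⟨c, hc, hqc⟩
        obtain ⟨x, rfl⟩ := Quotient.exists_rep q
        obtain ⟨z, hzx, hz⟩ := equot_back hX (show Quotient.mk (eSetoid X) x ≤ c from hqc)
        refine ⟨x, ⟨z, ?_, hzx⟩, rfl⟩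
        show Quotient.mk (eSetoid X) z ∈ C
        rw [hz]
        exact hc
      · rintro ⟨x, ⟨z, hz, hxz⟩, rfl⟩
        exact ⟨Quotient.mk (eSetoid X) z, hz, equot_monotone hX hxz⟩
    rw [him]
    exact equot_image_isClopen' hD hDsat

end quot3

section quot4
variable {X : Type u} [TopologicalSpace X] [PartialOrder X]

lemma hclos_finset_union {ι : Type*} (t : Finset ι) (g : ι → Set X) :
    (∀ i ∈ t, HClos {V : Set X | IsRCU V} (g i)) →
      HClos {V : Set X | IsRCU V} (⋃ i ∈ t, g i) := by
  classical
  induction t using Finset.induction_on with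
  | empty => intro _; simpa using HClos.bot
  | insert _ _ hna ih =>
      intro h
      rw [Finset.set_biUnion_insert]
      exact HClos.union (h _ (Finset.mem_insert_self _ _))
        (ih fun i hi => h i (Finset.mem_insert_of_mem hi))

lemma hclos_finset_inter {ι : Type*} (t : Finset ι) (g : ι → Set X) :
    (∀ i ∈ t, HClos {V : Set X | IsRCU V} (g i)) →
      HClos {V : Set X | IsRCU V} (⋂ i ∈ t, g i) := by
  classical
  induction t using Finset.induction_on with
  | empty => intro _; simpa using HClos.top
  | insert _ _ hna ih =>
      intro h
      rw [Finset.set_biInter_insert]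
      exact HClos.inter (h _ (Finset.mem_insert_self _ _))
        (ih fun i hi => h i (Finset.mem_insert_of_mem hi))

lemma sat_image_inter {A B : Set X}
    (hA : Quotient.mk (eSetoid X) ⁻¹' (Quotient.mk (eSetoid X) '' A) = A) :
    Quotient.mk (eSetoid X) '' (A ∩ B) =
      (Quotient.mk (eSetoid X) '' A) ∩ (Quotient.mk (eSetoid X) '' B) := by
  refine Set.Subset.antisymm (Set.image_inter_subset _ _ _) ?_
  rintro q ⟨⟨a, ha, rfl⟩, ⟨b, hb, hba⟩⟩
  refine ⟨b, ⟨?_, hb⟩, hba⟩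
  have hmem : Quotient.mk (eSetoid X) b ∈ Quotient.mk (eSetoid X) '' A := by
    rw [hba]
    exact ⟨a, ha, rfl⟩
  rw [← hA]
  exact hmem

lemma equot_image_biInter {ι : Type*} (t : Finset ι) (g : ι → Set X) :
    (∀ i ∈ t, HClos {V : Set X | IsRCU V} (g i)) →
      Quotient.mk (eSetoid X) '' (⋂ i ∈ t, g i) =
        ⋂ i ∈ t, Quotient.mk (eSetoid X) '' (g i) := by
  classical
  induction t using Finset.induction_on with
  | empty =>
      intro _
      simp only [Finset.notMem_empty, Set.iInter_of_empty, Set.iInter_univ]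
      rw [Set.image_univ]
      exact Set.range_eq_univ.mpr (fun q => Quotient.exists_rep q)
  | insert _ _ hna ih =>
      intro h
      rw [Finset.set_biInter_insert, Finset.set_biInter_insert,
        sat_image_inter (equot_sat (h _ (Finset.mem_insert_self _ _))),
        ih fun i hi => h i (Finset.mem_insert_of_mem hi)]

variable (hX : IsEsakia X)
include hX

lemma equot_clopen_upset_image {V : Set (EQuot X)} (hVc : IsClopen V) (hVu : IsUpperSet V) :
    ∃ U : Set X, HClos {V : Set X | IsRCU V} U ∧ V = Quotient.mk (eSetoid X) '' U := by
  haveI := hX.1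
  haveI : CompactSpace (EQuot X) := Quotient.compactSpace
  have step1 : ∀ w ∉ V, ∃ W : Set X, HClos {V : Set X | IsRCU V} W ∧
      V ⊆ Quotient.mk (eSetoid X) '' W ∧ w ∉ Quotient.mk (eSetoid X) '' W := by
    intro w hw
    have inner : ∀ i : {v // v ∈ V}, ∃ U : Set X, HClos {V : Set X | IsRCU V} U ∧
        i.1 ∈ Quotient.mk (eSetoid X) '' U ∧ w ∉ Quotient.mk (eSetoid X) '' U := by
      rintro ⟨v, hv⟩
      obtain ⟨a, rfl⟩ := Quotient.exists_rep v
      obtain ⟨b, rfl⟩ := Quotient.exists_rep w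
      have hle : ¬ Quotient.mk (eSetoid X) a ≤ Quotient.mk (eSetoid X) b :=
        fun hle => hw (hVu hle hv)
      rw [equot_le_iff] at hle
      push_neg at hle
      obtain ⟨U, hU, haU, hbU⟩ := hle
      refine ⟨U, hU, ⟨a, haU, rfl⟩, fun hc => hbU ?_⟩
      rw [← equot_sat hU]
      exact hc
    choose g hg1 hg2 hg3 using inner
    have hVcomp : IsCompact V := hVc.isClosed.isCompact
    obtain ⟨t, ht⟩ := hVcomp.elim_finite_subcover
      (fun i : {v // v ∈ V} => Quotient.mk (eSetoid X) '' (g i))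
      (fun i => (equot_image_isClopen hX (hg1 i)).isOpen)
      (fun v hv => Set.mem_iUnion.2 ⟨⟨v, hv⟩, hg2 ⟨v, hv⟩⟩)
    refine ⟨⋃ i ∈ t, g i, hclos_finset_union t g (fun i _ => hg1 i), ?_, ?_⟩
    · rw [Set.image_iUnion₂]
      exact ht
    · rw [Set.image_iUnion₂]
      intro hc
      obtain ⟨i, _, hc⟩ := Set.mem_iUnion₂.1 hc
      exact hg3 i hc
  have innerc : ∀ j : {w // w ∈ Vᶜ}, ∃ W : Set X, HClos {V : Set X | IsRCU V} W ∧
      V ⊆ Quotient.mk (eSetoid X) '' W ∧ j.1 ∉ Quotient.mk (eSetoid X) '' W :=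
    fun j => step1 j.1 j.2
  choose g hg1 hg2 hg3 using innerc
  have hVccomp : IsCompact Vᶜ := hVc.compl.isClosed.isCompact
  obtain ⟨t, ht⟩ := hVccomp.elim_finite_subcover
    (fun j : {w // w ∈ Vᶜ} => (Quotient.mk (eSetoid X) '' (g j))ᶜ)
    (fun j => (equot_image_isClopen hX (hg1 j)).compl.isOpen)
    (fun w hw => Set.mem_iUnion.2 ⟨⟨w, hw⟩, hg3 ⟨w, hw⟩⟩)
  refine ⟨⋂ j ∈ t, g j, hclos_finset_inter t g (fun j _ => hg1 j), ?_⟩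
  rw [equot_image_biInter t g (fun j _ => hg1 j)]
  apply Set.Subset.antisymm
  · exact Set.subset_iInter₂ (fun j _ => hg2 j)
  · intro q hq
    by_contra hqV
    obtain ⟨j, hjt, hj⟩ := Set.mem_iUnion₂.1 (ht hqV)
    exact hj (Set.mem_iInter₂.1 hq j hjt)

end quot4

section fwd
variable {X : Type u} [TopologicalSpace X] [PartialOrder X]
  {Y : Type u} [TopologicalSpace Y] [PartialOrder Y]
  {f : X → Y}

lemma fwd_preimage_dwn (hfm : Monotone f)
    (hfp : ∀ (x : X) (y' : Y), f x ≤ y' → ∃ y, x ≤ y ∧ f y = y') (S : Set Y) :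
    f ⁻¹' (dwn S) = dwn (f ⁻¹' S) := by
  ext x
  constructor
  · rintro ⟨s, hs, hxs⟩
    obtain ⟨z, hxz, hz⟩ := hfp x s hxs
    exact ⟨z, by rw [Set.mem_preimage, hz]; exact hs, hxz⟩
  · rintro ⟨z, hz, hxz⟩
    exact ⟨f z, hz, hfm hxz⟩

variable (hX : IsEsakia X) (hY : IsEsakia Y)
  (hfc : Continuous f) (hfm : Monotone f)
  (hfp : ∀ (x : X) (y' : Y), f x ≤ y' → ∃ y, x ≤ y ∧ f y = y')
  (hsurj : Function.Surjective f)
  (hmaxY : ∀ m ∈ maxSet X, f m ∈ maxSet Y)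
  (hmaxinj : ∀ m ∈ maxSet X, ∀ m' ∈ maxSet X, f m = f m' → m = m')

include hX hfm hfp hmaxY hmaxinj in
lemma fwd_le_max {x m : X} (hm : m ∈ maxSet X) (h : f x ≤ f m) : x ≤ m := by
  obtain ⟨w, hxw, hw⟩ := hfp x (f m) h
  obtain ⟨m', hm', hwm'⟩ := esakia_exists_max hX w
  have h1 : f m ≤ f m' := by
    rw [← hw]
    exact hfm hwm'
  have h2 : f m' = f m := hmaxY m hm (f m') h1
  have h3 : m' = m := hmaxinj m' hm' m hm h2
  exact hxw.trans (h3 ▸ hwm')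

include hX hY hfc hfm hfp hsurj hmaxY hmaxinj in
lemma fwd_preimage {U : Set X} (h : HClos {V : Set X | IsRCU V} U) :
    ∃ V : Set Y, IsClopen V ∧ IsUpperSet V ∧ U = f ⁻¹' V := by
  haveI := hX.1
  haveI := esakia_t2 hY
  induction h with
  | base U hU =>
      set D := dwn (pstar U) with hD
      have hDclop : IsClopen D := hX.2.2 _ (esakia_isClopen_pstar hX hU.1)
      have himgD : f '' D = {y | ∃ m ∈ maxSet X ∩ pstar U, y ≤ f m} := by
        ext y
        constructor
        · rintro ⟨x, ⟨z, hz, hxz⟩, rfl⟩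
          obtain ⟨m, hm, hzm⟩ := esakia_exists_max hX z
          exact ⟨m, ⟨hm, isUpperSet_pstar U hzm hz⟩, hfm (hxz.trans hzm)⟩
        · rintro ⟨m, ⟨hm, hmP⟩, hym⟩
          obtain ⟨x, rfl⟩ := hsurj y
          exact ⟨x, ⟨m, hmP, fwd_le_max hX hfm hfp hmaxY hmaxinj hm hym⟩, rfl⟩
      have hsat : f ⁻¹' (f '' D) = D := by
        refine Set.Subset.antisymm ?_ (Set.subset_preimage_image _ _)
        intro x hx
        rw [Set.mem_preimage, himgD] at hx
        obtain ⟨m, ⟨hm, hmP⟩, hxm⟩ := hx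
        exact ⟨m, hmP, fwd_le_max hX hfm hfp hmaxY hmaxinj hm hxm⟩
      have hcompl : (f '' D)ᶜ = f '' Dᶜ := by
        ext y
        constructor
        · intro hy
          obtain ⟨x, rfl⟩ := hsurj y
          exact ⟨x, fun hx => hy ⟨x, hx, rfl⟩, rfl⟩
        · rintro ⟨x, hx, rfl⟩ hc
          exact hx (by rw [← hsat]; exact hc)
      refine ⟨(f '' D)ᶜ, ?_, ?_, ?_⟩
      · constructor
        · rw [hcompl]
          exact (hDclop.compl.isClosed.isCompact.image hfc).isClosed
        · exact (hDclop.isClosed.isCompact.image hfc).isClosed.isOpen_compl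
      · intro y y' hyy' hy hc
        rw [himgD] at hc
        obtain ⟨m, hmem, hy'm⟩ := hc
        exact hy (himgD ▸ (⟨m, hmem, hyy'.trans hy'm⟩ :
          y ∈ {y | ∃ m ∈ maxSet X ∩ pstar U, y ≤ f m}))
      · rw [Set.preimage_compl, hsat]
        have : Dᶜ = pstar (pstar U) := rfl
        rw [this, ← hU.2.2]
  | bot => exact ⟨∅, isClopen_empty, fun _ _ _ h => h, by simp⟩
  | top => exact ⟨Set.univ, isClopen_univ, fun _ _ _ _ => trivial, by simp⟩
  | inter h1 h2 ih1 ih2 =>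
      obtain ⟨V1, hc1, hu1, rfl⟩ := ih1
      obtain ⟨V2, hc2, hu2, rfl⟩ := ih2
      exact ⟨V1 ∩ V2, hc1.inter hc2, hu1.inter hu2, by rw [Set.preimage_inter]⟩
  | union h1 h2 ih1 ih2 =>
      obtain ⟨V1, hc1, hu1, rfl⟩ := ih1
      obtain ⟨V2, hc2, hu2, rfl⟩ := ih2
      exact ⟨V1 ∪ V2, hc1.union hc2, hu1.union hu2, by rw [Set.preimage_union]⟩
  | imp h1 h2 ih1 ih2 =>
      obtain ⟨V1, hc1, hu1, rfl⟩ := ih1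
      obtain ⟨V2, hc2, hu2, rfl⟩ := ih2
      refine ⟨heyImp V1 V2, (hY.2.2 _ (hc1.diff hc2)).compl, isUpperSet_heyImp _ _, ?_⟩
      show heyImp (f ⁻¹' V1) (f ⁻¹' V2) = f ⁻¹' (dwn (V1 \ V2))ᶜ
      rw [Set.preimage_compl, fwd_preimage_dwn hfm hfp]
      show (dwn (f ⁻¹' V1 \ f ⁻¹' V2))ᶜ = _
      rw [Set.preimage_diff]

end fwd

/-- an Esakia space `X` satisfies "every clopen upset lies in the
Heyting closure of the regular clopen upsets" iff every surjective p-morphism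
out of `X` restricting to a homeomorphism on maximal elements is an
isomorphism of Esakia spaces. -/
theorem stmt4 {X : Type u} [TopologicalSpace X] [PartialOrder X] (hX : IsEsakia X) :
    (∀ U : Set X, IsClopen U → IsUpperSet U → HClos {V : Set X | IsRCU V} U) ↔
    (∀ (Y : Type u) (_ : TopologicalSpace Y) (_ : PartialOrder Y), IsEsakia Y →
      ∀ f : X → Y, IsPMorphism f → Function.Surjective f →
      (∃ e : ↥(maxSet X) ≃ₜ ↥(maxSet Y), ∀ m : ↥(maxSet X), (e m : Y) = f (m : X)) →
      ∃ e : X ≃ₜ Y, (∀ x : X, e x = f x) ∧ ∀ a b : X, a ≤ b ↔ f a ≤ f b) := by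
  constructor
  · -- forward
    intro hgen Y _ _ hY f hf hsurj hmax
    obtain ⟨hfc, hfm, hfp⟩ := hf
    obtain ⟨e, he⟩ := hmax
    have hmaxY : ∀ m ∈ maxSet X, f m ∈ maxSet Y := by
      intro m hm
      have := (e ⟨m, hm⟩).2
      rwa [he ⟨m, hm⟩] at this
    have hmaxinj : ∀ m ∈ maxSet X, ∀ m' ∈ maxSet X, f m = f m' → m = m' := by
      intro m hm m' hm' hf
      have h1 : (e ⟨m, hm⟩ : Y) = (e ⟨m', hm'⟩ : Y) := by
        rw [he ⟨m, hm⟩, he ⟨m', hm'⟩]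
        exact hf
      have h2 : e ⟨m, hm⟩ = e ⟨m', hm'⟩ := Subtype.coe_injective h1
      have h3 := e.injective h2
      exact congrArg Subtype.val h3
    have finj : Function.Injective f := by
      intro a b hab
      have key : ∀ c d : X, f c = f d → c ≤ d := by
        intro c d hcd
        by_contra hle
        obtain ⟨U, hUc, hUu, hcU, hdU⟩ := hX.2.1 c d hle
        obtain ⟨V, _, _, rfl⟩ := fwd_preimage hX hY hfc hfm hfp hsurj hmaxY hmaxinj
          (hgen _ hUc hUu)
        exact hdU (by rw [Set.mem_preimage, ← hcd]; exact hcU)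
      exact le_antisymm (key a b hab) (key b a hab.symm)
    haveI := hX.1
    haveI := esakia_t2 hY
    have hEquiv : X ≃ Y := Equiv.ofBijective f ⟨finj, hsurj⟩
    refine ⟨Continuous.homeoOfEquivCompactToT2 (f := Equiv.ofBijective f ⟨finj, hsurj⟩) hfc,
      fun x => rfl, fun a b => ⟨fun h => hfm h, fun h => ?_⟩⟩
    obtain ⟨z, haz, hz⟩ := hfp a (f b) h
    rwa [← finj hz]
  · -- backward
    intro hiso U hUc hUu
    haveI := hX.1
    haveI : T2Space (EQuot X) := equot_t2 hX
    haveI : CompactSpace (↥(maxSet X)) :=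
      isCompact_iff_compactSpace.1 (esakia_isClosed_maxSet hX).isCompact
    have hbij : Function.Bijective (fun m : ↥(maxSet X) =>
        (⟨Quotient.mk (eSetoid X) m.1, equot_max_mem hX m.2⟩ : ↥(maxSet (EQuot X)))) :=
      ⟨fun m m' h => Subtype.ext (equot_max_inj hX m.2 m'.2 (congrArg Subtype.val h)),
       fun q => by
         obtain ⟨m, hm, hq⟩ := equot_max_surj hX q.2
         exact ⟨⟨m, hm⟩, Subtype.ext hq⟩⟩
    have e0cont : Continuous (fun m : ↥(maxSet X) =>
        (⟨Quotient.mk (eSetoid X) m.1, equot_max_mem hX m.2⟩ : ↥(maxSet (EQuot X)))) :=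
      Continuous.subtype_mk (equot_continuous_mk.comp continuous_subtype_val) _
    obtain ⟨e, _, hord⟩ := hiso (EQuot X) _ _ (equot_isEsakia hX) (Quotient.mk (eSetoid X))
      ⟨equot_continuous_mk, equot_monotone hX, fun x q h => equot_back hX h⟩
      (fun q => Quotient.exists_rep q)
      ⟨Continuous.homeoOfEquivCompactToT2 (f := Equiv.ofBijective _ hbij) e0cont,
        fun m => rfl⟩
    have pinj : Function.Injective (Quotient.mk (eSetoid X)) := by
      intro a b hab
      exact le_antisymm ((hord a b).2 (le_of_eq hab)) ((hord b a).2 (le_of_eq hab.symm))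
    have hVc : IsClopen (Quotient.mk (eSetoid X) '' U) :=
      equot_image_isClopen' hUc (Set.preimage_image_eq U pinj)
    have hVu : IsUpperSet (Quotient.mk (eSetoid X) '' U) := by
      rintro q q' hle ⟨a, ha, rfl⟩
      obtain ⟨b, rfl⟩ := Quotient.exists_rep q'
      exact ⟨b, hUu ((hord a b).2 hle) ha, rfl⟩
    obtain ⟨U₀, hU₀, hV⟩ := equot_clopen_upset_image hX hVc hVu
    have : U = U₀ := by
      have h1 := Set.preimage_image_eq U pinj
      rw [hV, equot_sat hU₀] at h1
      exact h1.symm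
    rw [this]
    exact hU₀
end

section
/- Let h : F → F' be a surjective p-morphism between finite posets, let R and R' denote the collections of regular upsets of F and F' respectively. Then the preimage map U ↦ h⁻¹(U), defined on the Heyting closure ⟨R'⟩, takes values in the Heyting closure ⟨R⟩ and is a bijection onto ⟨R⟩ if and only if for all x, y ∈ F, ¬(x ∼∞ y) implies ¬(h(x) ∼∞ h(y)). -/
/-- The regular upsets of a poset: upsets `U` with `U = U**`. -/
def regUps (F : Type*) [Preorder F] : Set (Set F) :=
  {U | IsUpperSet U ∧ U = pstar (pstar U)}

/-- `Mset x` is the set of maximal elements above `x`. -/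
def Mset {X : Type*} [Preorder X] (x : X) : Set X :=
  {m | x ≤ m ∧ ∀ y, m ≤ y → y = m}

/-- The bounded bisimulation relations `∼ₙ`. -/
def simN {X : Type*} [Preorder X] : ℕ → X → X → Prop
  | 0, x, y => Mset x = Mset y
  | n + 1, x, y =>
      (∀ z, x ≤ z → ∃ w, y ≤ w ∧ simN n z w) ∧
      (∀ w, y ≤ w → ∃ z, x ≤ z ∧ simN n z w)

/-- `x ∼∞ y` iff `x ∼ₙ y` for all `n`. -/
def simInf {X : Type*} [Preorder X] (x y : X) : Prop := ∀ n : ℕ, simN n x y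

/-- A p-morphism of posets: monotone with the back condition. -/
def IsPMorphPoset {P Q : Type*} [Preorder P] [Preorder Q] (f : P → Q) : Prop :=
  Monotone f ∧ ∀ (x : P) (y' : Q), f x ≤ y' → ∃ y, x ≤ y ∧ f y = y'

section Lemmas
set_option linter.unusedVariables false
set_option linter.unusedSectionVars false
section Basic
variable {X : Type*} [PartialOrder X]

variable {X : Type*} [PartialOrder X]

lemma simN_refl (n : ℕ) (x : X) : simN n x x := by
  induction n generalizing x with
  | zero => rfl
  | succ n ih => exact ⟨fun z hz => ⟨z, hz, ih z⟩, fun z hz => ⟨z, hz, ih z⟩⟩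

lemma simN_symm {n : ℕ} {x y : X} (h : simN n x y) : simN n y x := by
  induction n generalizing x y with
  | zero => exact h.symm
  | succ n ih =>
    exact ⟨fun z hz => (h.2 z hz).imp (fun w hw => ⟨hw.1, ih hw.2⟩),
           fun z hz => (h.1 z hz).imp (fun w hw => ⟨hw.1, ih hw.2⟩)⟩

lemma mem_Mset_self {m : X} (hm : ∀ y, m ≤ y → y = m) : m ∈ Mset m := ⟨le_rfl, hm⟩

lemma Mset_mono {x y : X} (hxy : x ≤ y) : Mset y ⊆ Mset x :=
  fun m hm => ⟨hxy.trans hm.1, hm.2⟩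

lemma simN_succ {n : ℕ} {x y : X} (h : simN (n+1) x y) : simN n x y := by
  induction n generalizing x y with
  | zero =>
    ext m
    constructor
    · intro hm
      obtain ⟨w, hyw, hsw⟩ := h.1 m hm.1
      have : m ∈ Mset w := hsw ▸ mem_Mset_self hm.2
      exact ⟨hyw.trans this.1, hm.2⟩
    · intro hm
      obtain ⟨z, hxz, hsz⟩ := h.2 m hm.1
      have : m ∈ Mset z := hsz.symm ▸ mem_Mset_self hm.2
      exact ⟨hxz.trans this.1, hm.2⟩
  | succ n ih =>
    exact ⟨fun z hz => (h.1 z hz).imp (fun w hw => ⟨hw.1, ih hw.2⟩),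
           fun w hw => (h.2 w hw).imp (fun z hz => ⟨hz.1, ih hz.2⟩)⟩

lemma simN_of_le {m n : ℕ} (hmn : m ≤ n) {x y : X} (h : simN n x y) : simN m x y := by
  induction n with
  | zero => exact Nat.le_zero.mp hmn ▸ h
  | succ n ih =>
    rcases Nat.eq_or_lt_of_le hmn with rfl | hlt
    · exact h
    · exact ih (Nat.lt_succ_iff.mp hlt) (simN_succ h)

lemma isUpperSet_compl_dwn (S : Set X) : IsUpperSet ((dwn S)ᶜ) := by
  intro a b hab ha hb
  exact ha (hb.imp fun c hc => ⟨hc.1, hab.trans hc.2⟩)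

lemma hclos_isUpperSet {R : Set (Set X)} (hR : ∀ U ∈ R, IsUpperSet U) {U : Set X}
    (h : HClos R U) : IsUpperSet U := by
  induction h with
  | base U hU => exact hR U hU
  | bot => exact isUpperSet_empty
  | top => exact isUpperSet_univ
  | inter _ _ h1 h2 => exact h1.inter h2
  | union _ _ h1 h2 => exact h1.union h2
  | imp _ _ _ _ => exact isUpperSet_compl_dwn _

lemma exists_mem_Mset [Finite X] (x : X) : ∃ m, m ∈ Mset x := by
  obtain ⟨m, hm, hmax⟩ := Set.Finite.exists_maximalFor id {m | x ≤ m} (Set.toFinite _) ⟨x, le_rfl⟩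
  exact ⟨m, hm, fun y hy => le_antisymm (hmax (hm.trans hy) hy) hy⟩

lemma pstar_pstar_eq [Finite X] (U : Set X) :
    pstar (pstar U) = {x | Mset x ⊆ U} := by
  ext x
  simp only [pstar, dwn, Set.mem_compl_iff, Set.mem_setOf_eq]
  constructor
  · intro hx m hm
    by_contra hmU
    exact hx ⟨m, fun hc => hc.elim (fun u hu => hmU (hm.2 u hu.2 ▸ hu.1)), hm.1⟩
  · rintro hx ⟨z, hz, hxz⟩
    obtain ⟨m, hmz⟩ := exists_mem_Mset z
    exact hz ⟨m, hx ⟨hxz.trans hmz.1, hmz.2⟩, hmz.1⟩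

end Basic

section Two
variable {X : Type*} [PartialOrder X] [Finite X]

variable {X : Type*} [PartialOrder X] [Finite X]

/-- Members of the Heyting closure of regular upsets are simN-invariant for some n. -/
lemma hclos_inv {U : Set X} (h : HClos (regUps X) U) :
    ∃ n, ∀ x y, simN n x y → x ∈ U → y ∈ U := by
  induction h with
  | base U hU =>
    refine ⟨0, fun x y hxy hx => ?_⟩
    have := hU.2
    rw [pstar_pstar_eq U] at this
    rw [this] at hx ⊢
    exact fun m hm => hx ((show Mset x = Mset y from hxy) ▸ hm)
  | bot => exact ⟨0, fun x y _ hx => hx.elim⟩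
  | top => exact ⟨0, fun x y _ _ => trivial⟩
  | inter h1 h2 ih1 ih2 =>
    obtain ⟨n1, H1⟩ := ih1; obtain ⟨n2, H2⟩ := ih2
    exact ⟨max n1 n2, fun x y hxy hx =>
      ⟨H1 x y (simN_of_le (le_max_left _ _) hxy) hx.1,
       H2 x y (simN_of_le (le_max_right _ _) hxy) hx.2⟩⟩
  | union h1 h2 ih1 ih2 =>
    obtain ⟨n1, H1⟩ := ih1; obtain ⟨n2, H2⟩ := ih2
    exact ⟨max n1 n2, fun x y hxy hx =>
      hx.imp (H1 x y (simN_of_le (le_max_left _ _) hxy))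
             (H2 x y (simN_of_le (le_max_right _ _) hxy))⟩
  | @imp U V h1 h2 ih1 ih2 =>
    obtain ⟨n1, H1⟩ := ih1; obtain ⟨n2, H2⟩ := ih2
    refine ⟨max n1 n2 + 1, fun x y hxy hx => ?_⟩
    rintro ⟨w, hw, hyw⟩
    obtain ⟨z, hxz, hzw⟩ := hxy.2 w hyw
    have hzU : z ∈ U := H1 w z (simN_of_le (le_max_left _ _) (simN_symm hzw)) hw.1
    have hzV : z ∈ V := by
      by_contra hzV
      exact hx ⟨z, ⟨hzU, hzV⟩, hxz⟩
    exact hw.2 (H2 z w (simN_of_le (le_max_right _ _) hzw) hzV)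

/-- The set of all points which `m ∉ Mset ·` is a regular upset (m maximal). -/
lemma sep_reg {m : X} (hm : ∀ y, m ≤ y → y = m) : {z | m ∉ Mset z} ∈ regUps X := by
  have hup : IsUpperSet {z : X | m ∉ Mset z} := by
    intro a b hab ha hb
    exact ha (Mset_mono hab hb)
  refine ⟨hup, ?_⟩
  rw [pstar_pstar_eq]
  ext x
  simp only [Set.mem_setOf_eq, Set.subset_def]
  constructor
  · intro hx m' hm' hmm'
    have : m = m' := hm'.2 m hmm'.1
    exact hx (this ▸ hm')
  · intro hx hmx
    exact hx m hmx ⟨le_rfl, hm⟩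

variable (R : Set (Set X))

/-- Intersection of all HClos sets containing x. -/
def Ax (x : X) : Set X := ⋂₀ {U | HClos R U ∧ x ∈ U}
def Bx (x : X) : Set X := ⋃₀ {U | HClos R U ∧ x ∉ U}

lemma hclos_sInter {S : Set (Set X)} (h : ∀ U ∈ S, HClos R U) : HClos R (⋂₀ S) := by
  refine Set.Finite.induction_on (motive := fun T _ => T ⊆ {U | HClos R U} → HClos R (⋂₀ T))
    S (Set.toFinite S) (fun _ => by simpa using HClos.top) ?_ h
  intro U T _ _ ih hsub
  rw [Set.sInter_insert]
  exact HClos.inter (hsub (Set.mem_insert _ _))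
    (ih fun V hV => hsub (Set.mem_insert_of_mem _ hV))

lemma hclos_sUnion {S : Set (Set X)} (h : ∀ U ∈ S, HClos R U) : HClos R (⋃₀ S) := by
  refine Set.Finite.induction_on (motive := fun T _ => T ⊆ {U | HClos R U} → HClos R (⋃₀ T))
    S (Set.toFinite S) (fun _ => by simpa using HClos.bot) ?_ h
  intro U T _ _ ih hsub
  rw [Set.sUnion_insert]
  exact HClos.union (hsub (Set.mem_insert _ _))
    (ih fun V hV => hsub (Set.mem_insert_of_mem _ hV))

lemma hclos_Ax (x : X) : HClos R (Ax R x) := hclos_sInter R fun U hU => hU.1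
lemma hclos_Bx (x : X) : HClos R (Bx R x) := hclos_sUnion R fun U hU => hU.1

omit [Finite X] in
lemma mem_Ax_iff {x y : X} : y ∈ Ax R x ↔ ∀ U, HClos R U → x ∈ U → y ∈ U :=
  ⟨fun h U hU hx => h U ⟨hU, hx⟩, fun h U hU => h U hU.1 hU.2⟩

omit [Finite X] in
lemma mem_Bx_iff {x y : X} : y ∈ Bx R x ↔ ∃ U, HClos R U ∧ x ∉ U ∧ y ∈ U := by
  constructor
  · rintro ⟨U, ⟨hU, hx⟩, hy⟩; exact ⟨U, hU, hx, hy⟩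
  · rintro ⟨U, hU, hx, hy⟩; exact ⟨U, ⟨hU, hx⟩, hy⟩

lemma self_mem_Ax (x : X) : x ∈ Ax R x := (mem_Ax_iff R).2 fun _ _ hx => hx
lemma self_not_mem_Bx (x : X) : x ∉ Bx R x := fun hx => by
  obtain ⟨U, _, hxU, hxU'⟩ := (mem_Bx_iff R).1 hx; exact hxU hxU'

end Two

section Three
variable {X : Type*} [PartialOrder X] [Finite X]

variable {X : Type*} [PartialOrder X] [Finite X]

/-- Separation: a single point z with no simN-n partner above c yields a separator. -/
lemma sep_step {n : ℕ} (IH : ∀ x y : X, ¬ simN n x y →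
      ∃ U, HClos (regUps X) U ∧ ((x ∈ U ∧ y ∉ U) ∨ (y ∈ U ∧ x ∉ U)))
    {c z : X} (hz : ∀ w, c ≤ w → ¬ simN n z w) :
    c ∈ heyImp (Ax (regUps X) z) (Bx (regUps X) z) ∧
      ∀ t, t ≤ z → t ∉ heyImp (Ax (regUps X) z) (Bx (regUps X) z) := by
  constructor
  · rintro ⟨w, ⟨hwA, hwB⟩, hcw⟩
    obtain ⟨U, hU, hsep⟩ := IH z w (hz w hcw)
    rcases hsep with ⟨hzU, hwU⟩ | ⟨hwU, hzU⟩
    · exact hwU ((mem_Ax_iff _).1 hwA U hU hzU)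
    · exact hwB ((mem_Bx_iff _).2 ⟨U, hU, hzU, hwU⟩)
  · intro t htz ht
    exact ht ⟨z, ⟨self_mem_Ax _ z, self_not_mem_Bx _ z⟩, htz⟩

lemma sep : ∀ (n : ℕ) (x y : X), ¬ simN n x y →
    ∃ U, HClos (regUps X) U ∧ ((x ∈ U ∧ y ∉ U) ∨ (y ∈ U ∧ x ∉ U)) := by
  intro n
  induction n with
  | zero =>
    intro x y hxy
    have : ¬ (Mset x ⊆ Mset y ∧ Mset y ⊆ Mset x) := by
      intro ⟨h1, h2⟩; exact hxy (Set.Subset.antisymm h1 h2)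
    rw [not_and_or] at this
    rcases this with hns | hns
    · rw [Set.not_subset] at hns
      obtain ⟨m, hmx, hmy⟩ := hns
      refine ⟨{z | m ∉ Mset z}, HClos.base _ (sep_reg hmx.2), Or.inr ⟨hmy, fun hx => hx hmx⟩⟩
    · rw [Set.not_subset] at hns
      obtain ⟨m, hmy, hmx⟩ := hns
      refine ⟨{z | m ∉ Mset z}, HClos.base _ (sep_reg hmy.2), Or.inl ⟨hmx, fun hy => hy hmy⟩⟩
  | succ n ih =>
    intro x y hxy
    have hxy2 : ¬((∀ z, x ≤ z → ∃ w, y ≤ w ∧ simN n z w) ∧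
        (∀ w, y ≤ w → ∃ z, x ≤ z ∧ simN n z w)) := hxy
    rcases not_and_or.1 hxy2 with hA | hB
    · push_neg at hA
      obtain ⟨z, hxz, hz⟩ := hA
      obtain ⟨hy, hx⟩ := sep_step ih hz
      exact ⟨_, HClos.imp (hclos_Ax _ z) (hclos_Bx _ z), Or.inr ⟨hy, hx x hxz⟩⟩
    · push_neg at hB
      obtain ⟨w, hyw, hw⟩ := hB
      obtain ⟨hx, hy⟩ := sep_step ih (fun t ht hs => hw t ht (simN_symm hs))
      exact ⟨_, HClos.imp (hclos_Ax _ w) (hclos_Bx _ w), Or.inl ⟨hx, hy y hyw⟩⟩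

lemma agree_imp_simInf {x y : X}
    (h : ∀ U, HClos (regUps X) U → (x ∈ U ↔ y ∈ U)) : simInf x y := by
  intro n
  by_contra hn
  obtain ⟨U, hU, hsep⟩ := sep n x y hn
  rcases hsep with ⟨h1, h2⟩ | ⟨h1, h2⟩
  · exact h2 ((h U hU).1 h1)
  · exact h2 ((h U hU).2 h1)

/-- Back condition for the induced quasi-order. -/
lemma back {x y : X} (h : y ∈ Ax (regUps X) x) : ∃ y', x ≤ y' ∧ simInf y' y := by
  by_contra hc
  push_neg at hc
  have hx : x ∈ heyImp (Ax (regUps X) y) (Bx (regUps X) y) := by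
    rintro ⟨y', ⟨hA, hB⟩, hxy'⟩
    obtain ⟨n, hn⟩ : ∃ n, ¬ simN n y' y := by
      by_contra hcc; push_neg at hcc; exact (hc y' hxy') hcc
    obtain ⟨U, hU, hsep⟩ := sep n y' y hn
    rcases hsep with ⟨h1, h2⟩ | ⟨h1, h2⟩
    · exact hB ((mem_Bx_iff _).2 ⟨U, hU, h2, h1⟩)
    · exact h2 ((mem_Ax_iff _).1 hA U hU h1)
  have hy : y ∈ heyImp (Ax (regUps X) y) (Bx (regUps X) y) :=
    (mem_Ax_iff _).1 h _ (HClos.imp (hclos_Ax _ y) (hclos_Bx _ y)) hx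
  exact hy ⟨y, ⟨self_mem_Ax _ y, self_not_mem_Bx _ y⟩, le_rfl⟩

/-- Every simInf-invariant upset is in the Heyting closure of regular upsets. -/
lemma inv_upset_mem_hclos {U : Set X} (hup : IsUpperSet U)
    (hinv : ∀ x y, simInf x y → x ∈ U → y ∈ U) : HClos (regUps X) U := by
  have hU : U = ⋃₀ ((Ax (regUps X)) '' U) := by
    ext y
    constructor
    · intro hy
      exact ⟨Ax (regUps X) y, ⟨y, hy, rfl⟩, self_mem_Ax _ y⟩
    · rintro ⟨_, ⟨x, hxU, rfl⟩, hyA⟩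
      obtain ⟨y', hxy', hsim⟩ := back hyA
      exact hinv y' y hsim (hup hxy' hxU)
  rw [hU]
  exact hclos_sUnion _ (by rintro _ ⟨x, _, rfl⟩; exact hclos_Ax _ x)

end Three

section Four
variable {F F' : Type*} [PartialOrder F] [PartialOrder F'] {h : F → F'}

variable {F F' : Type*} [PartialOrder F] [PartialOrder F'] {h : F → F'}

lemma preimage_dwn (hpm : IsPMorphPoset h) (U : Set F') :
    h ⁻¹' (dwn U) = dwn (h ⁻¹' U) := by
  ext x
  constructor
  · rintro ⟨u, hu, hxu⟩
    obtain ⟨y, hxy, hy⟩ := hpm.2 x u hxu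
    exact ⟨y, by simp [Set.mem_preimage, hy, hu], hxy⟩
  · rintro ⟨y, hy, hxy⟩
    exact ⟨h y, hy, hpm.1 hxy⟩

lemma preimage_heyImp (hpm : IsPMorphPoset h) (U V : Set F') :
    h ⁻¹' (heyImp U V) = heyImp (h ⁻¹' U) (h ⁻¹' V) := by
  unfold heyImp
  rw [Set.preimage_compl, ← Set.preimage_diff, preimage_dwn hpm]

lemma preimage_regUps (hpm : IsPMorphPoset h) {U : Set F'} (hU : U ∈ regUps F') :
    h ⁻¹' U ∈ regUps F := by
  refine ⟨fun a b hab ha => hU.1 (hpm.1 hab) ha, ?_⟩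
  have : pstar (pstar (h ⁻¹' U)) = h ⁻¹' (pstar (pstar U)) := by
    unfold pstar
    rw [Set.preimage_compl, preimage_dwn hpm, Set.preimage_compl, preimage_dwn hpm]
  rw [this, ← hU.2]

lemma preimage_hclos (hpm : IsPMorphPoset h) {U : Set F'} (hU : HClos (regUps F') U) :
    HClos (regUps F) (h ⁻¹' U) := by
  induction hU with
  | base U hU => exact HClos.base _ (preimage_regUps hpm hU)
  | bot => rw [Set.preimage_empty]; exact HClos.bot
  | top => rw [Set.preimage_univ]; exact HClos.top
  | inter h1 h2 ih1 ih2 => rw [Set.preimage_inter]; exact HClos.inter ih1 ih2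
  | union h1 h2 ih1 ih2 => rw [Set.preimage_union]; exact HClos.union ih1 ih2
  | imp h1 h2 ih1 ih2 => rw [preimage_heyImp hpm]; exact HClos.imp ih1 ih2

end Four
end Lemmas

/-- for a surjective p-morphism `h : F → F'` of finite posets,
the preimage map on the Heyting closure `⟨R'⟩` of the regular upsets of `F'`
lands in the Heyting closure `⟨R⟩` of the regular upsets of `F` and is a
bijection onto it iff `h` reflects `∼∞`-distinguishability, i.e.
`¬(x ∼∞ y)` implies `¬(h x ∼∞ h y)`. -/
theorem stmt12 {F F' : Type*} [Fintype F] [PartialOrder F]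
    [Fintype F'] [PartialOrder F'] (h : F → F')
    (hpm : IsPMorphPoset h) (hsurj : Function.Surjective h) :
    ((∀ U : Set F', HClos (regUps F') U → HClos (regUps F) (h ⁻¹' U)) ∧
      Set.BijOn (fun U : Set F' => h ⁻¹' U)
        {U | HClos (regUps F') U} {U | HClos (regUps F) U}) ↔
    (∀ x y : F, ¬simInf x y → ¬simInf (h x) (h y)) := by
  have hregup : ∀ (X : Type _) [PartialOrder X], ∀ U ∈ regUps X, IsUpperSet U :=
    fun X _ U hU => hU.1
  constructor
  · rintro ⟨-, hbij⟩ x y hxy hsim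
    apply hxy
    apply agree_imp_simInf
    intro V hV
    obtain ⟨U, hU, hUV⟩ := hbij.2.2 hV
    obtain ⟨n, hn⟩ := hclos_inv hU
    simp only [Set.mem_setOf_eq] at hU
    rw [show V = h ⁻¹' U from hUV.symm]
    exact ⟨fun hx => hn (h x) (h y) (hsim n) hx,
           fun hy => hn (h y) (h x) (simN_symm (hsim n)) hy⟩
  · intro hrefl
    have hmapsto : ∀ U : Set F', HClos (regUps F') U → HClos (regUps F) (h ⁻¹' U) :=
      fun U hU => preimage_hclos hpm hU
    refine ⟨hmapsto, hmapsto, fun U _ V _ hUV => hsurj.preimage_injective hUV, ?_⟩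
    intro V hV
    simp only [Set.mem_setOf_eq] at hV
    obtain ⟨n0, hn0⟩ := hclos_inv hV
    have hVinv : ∀ a b : F, simInf a b → a ∈ V → b ∈ V :=
      fun a b hab ha => hn0 a b (hab n0) ha
    have hVup : IsUpperSet V := hclos_isUpperSet (hregup F) hV
    have hkey : ∀ a b : F, simInf (h a) (h b) → simInf a b := by
      intro a b hab
      by_contra hc
      exact hrefl a b hc hab
    refine ⟨h '' V, ?_, ?_⟩
    · apply inv_upset_mem_hclos
      · rintro u' v' huv ⟨a, ha, rfl⟩
        obtain ⟨b, hab, hb⟩ := hpm.2 a v' huv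
        exact ⟨b, hVup hab ha, hb⟩
      · rintro u' v' huv ⟨a, ha, rfl⟩
        obtain ⟨b, rfl⟩ := hsurj v'
        exact ⟨b, hVinv a b (hkey a b huv) ha, rfl⟩
    · ext a
      simp only [Set.mem_preimage, Set.mem_image]
      constructor
      · rintro ⟨b, hb, hba⟩
        have hsb : simInf (h b) (h a) := by rw [hba]; exact fun n => simN_refl n _
        exact hVinv b a (hkey b a hsb) hb
      · intro ha; exact ⟨a, ha, rfl⟩
end
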